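/- Let x, y, Δx > 0 and h ∈ [0,1), and let Δy = y·Δx·(1 − h)/(x + Δx·(1 − h)) be the ASAS-AMM output. Then the post-swap constant product satisfies (x + Δx) · (y − Δy) ≥ x · y, and consequently (x + Δx) · (y − Δy) ≥ x · y · (1 − h); i.e., every ASAS-AMM swap weakly increases the constant-product invariant and in particular preserves the risk-adjusted invariant k_adj = x·y·(1 − h). -/
import Mathlib


theorem asas_swap_preserves_invariant
    (x y Δx h : ℝ)
    (hx : 0 < x) (hy : 0 < y) (hΔx : 0 < Δx)
    (hh0 : 0 ≤ h) (hh1 : h < 1) :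
    (x + Δx) * (y - y * Δx * (1 - h) / (x + Δx * (1 - h))) ≥ x * y ∧
      (x + Δx) * (y - y * Δx * (1 - h) / (x + Δx * (1 - h))) ≥ x * y * (1 - h) := by
  have hd : 0 < x + Δx * (1 - h) := by nlinarith
  have heq : y - y * Δx * (1 - h) / (x + Δx * (1 - h)) = y * x / (x + Δx * (1 - h)) := by
    field_simp
    ring
  have h1 : (x + Δx) * (y - y * Δx * (1 - h) / (x + Δx * (1 - h))) ≥ x * y := by
    rw [heq, ge_iff_le, mul_div_assoc', le_div_iff₀ hd]
    nlinarith [mul_nonneg (mul_nonneg (mul_nonneg hx.le hy.le) hΔx.le) hh0]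
  refine ⟨h1, le_trans ?_ h1⟩
  nlinarith [mul_nonneg (mul_nonneg hx.le hy.le) hh0]
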